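/- The axiom CONV: ○(φ∧ψ) ∧ ○(φ∨χ) → ○φ is valid on every convex neighborhood frame under the convex neighborhood semantics. -/
import Mathlib

/-- Formulas of the unimodal language `L_○`. -/
inductive Form (P : Type) : Type where
  | atom : P → Form P
  | top : Form P
  | not : Form P → Form P
  | and : Form P → Form P → Form P
  | circ : Form P → Form P

namespace Form
variable {P : Type}
/-- `φ ∨ ψ`. -/
def or (φ ψ : Form P) : Form P := .not (.and (.not φ) (.not ψ))
/-- `φ → ψ`. -/
def imp (φ ψ : Form P) : Form P := .not (.and φ (.not ψ))
/-- `φ ↔ ψ`. -/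
def iff (φ ψ : Form P) : Form P := .and (imp φ ψ) (imp ψ φ)
/-- `●φ := ○¬φ`. -/
def bcirc (φ : Form P) : Form P := .circ (.not φ)
end Form

/-- A convex neighborhood model. -/
structure NbhModel (W P : Type) where
  Np : W → Set (Set W)
  Nm : W → Set (Set W)
  V : P → Set W

/-- Convex neighborhood semantics `N,w ⊩ φ`. -/
def NSat {W P : Type} (N : NbhModel W P) : W → Form P → Prop
  | w, .atom p => w ∈ N.V p
  | _, .top => True
  | w, .not φ => ¬ NSat N w φ
  | w, .and φ ψ => NSat N w φ ∧ NSat N w ψ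
  | w, .circ φ => ∃ X ∈ N.Np w, ∃ Y ∈ N.Nm w,
      X ⊆ { v | NSat N v φ } ∧ Y ⊆ { v | NSat N v φ }ᶜ
/-- the axiom `CONV : ○(φ∧ψ) ∧ ○(φ∨χ) → ○φ` is valid on every
convex neighborhood frame. -/
theorem conv_valid {W P : Type} [Nonempty W] (Np Nm : W → Set (Set W)) :
    ∀ (V : P → Set W) (w : W) (φ ψ χ : Form P),
      NSat ⟨Np, Nm, V⟩ w
        (Form.imp (.and (.circ (.and φ ψ)) (.circ (Form.or φ χ))) (.circ φ)) := by
  intro V w φ ψ χ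
  simp only [Form.imp, Form.or, NSat, not_and, not_not]
  rintro ⟨⟨X, hX, Y, hY, hX1, hY1⟩, ⟨X', hX', Y', hY', hX2, hY2⟩⟩
  refine ⟨X, hX, Y', hY', fun v hv => (hX1 hv).1, fun v hv hvφ => ?_⟩
  have h := hY2 hv
  simp only [NSat, Set.mem_compl_iff, Set.mem_setOf_eq, not_not] at h
  exact h fun hn => absurd hvφ hn
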